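/- For all real x > −1/2, one has log(x + 1/2) < ψ(x+1) < log(x+1), where ψ is the digamma function. -/

import Mathlib

/-!
By Bohr–Mollerup, `log ∘ Γ` is convex on `(0, ∞)` with derivative `ψ`, and the functional
equation `ψ (y + 1) = ψ y + 1 / y` rules out any interval on which `ψ` is constant, so `log ∘ Γ`
is strictly convex. Its secant slope over `[y, y + 1]` is `log y`, hence
`ψ y < log y < ψ (y + 1)`. For the sharper lower bound, `ψ w - log (w - 1/2)` strictly decreases
under `w ↦ w + 1`, since `1 / w` is only the first term of the positive series for
`log (w + 1/2) - log (w - 1/2)`, and it is at least `log (w - 1) - log (w - 1/2) → 0` as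
`w → ∞`; so it is positive.
-/

open Real Set Filter Topology

/-- The digamma function `ψ = Γ'/Γ`. -/
noncomputable def digamma (x : ℝ) : ℝ := deriv Real.Gamma x / Real.Gamma x

lemma hasDerivAt_log_Gamma {y : ℝ} (hy : 0 < y) : HasDerivAt (log ∘ Gamma) (digamma y) y := by
  have hΓ : HasDerivAt Gamma (deriv Gamma y) y :=
    (differentiableAt_Gamma fun m => ((neg_nonpos.mpr m.cast_nonneg).trans_lt hy).ne').hasDerivAt
  simpa only [digamma, div_eq_inv_mul] using (hasDerivAt_log (Gamma_pos_of_pos hy).ne').comp y hΓ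

lemma log_Gamma_add_one {y : ℝ} (hy : 0 < y) : log (Gamma (y + 1)) = log (Gamma y) + log y := by
  rw [Gamma_add_one hy.ne', log_mul hy.ne' (Gamma_pos_of_pos hy).ne', add_comm]

lemma digamma_add_one {y : ℝ} (hy : 0 < y) : digamma (y + 1) = digamma y + y⁻¹ := by
  have hshift : HasDerivAt (fun t => (log ∘ Gamma) (t + 1)) (digamma (y + 1)) y :=
    (hasDerivAt_log_Gamma (by linarith)).comp_add_const y 1
  have hsum : HasDerivAt (fun t => log (Gamma t) + log t) (digamma y + y⁻¹) y :=
    (hasDerivAt_log_Gamma hy).add (hasDerivAt_log hy.ne')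
  refine hshift.unique (hsum.congr_of_eventuallyEq ?_)
  filter_upwards [eventually_gt_nhds hy] with t ht using log_Gamma_add_one ht

lemma strictMonoOn_digamma : StrictMonoOn digamma (Ioi 0) := by
  have hmono : MonotoneOn digamma (Ioi 0) := fun a ha b hb hab => by
    simpa only [(hasDerivAt_log_Gamma ha).deriv, (hasDerivAt_log_Gamma hb).deriv] using
      convexOn_log_Gamma.monotoneOn_deriv
        (fun t ht => (hasDerivAt_log_Gamma ht).differentiableAt) ha hb hab
  intro a (ha : 0 < a) b (hb : 0 < b) hab
  refine (hmono ha hb hab.le).lt_of_ne fun heq => ?_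
  have hstep : digamma (b + 1) < digamma (a + 1) := by
    rw [digamma_add_one ha, digamma_add_one hb, heq]
    gcongr
  exact hstep.not_ge (hmono (by simp; linarith) (by simp; linarith) (by linarith))

lemma strictConvexOn_log_Gamma : StrictConvexOn ℝ (Ioi 0) (log ∘ Gamma) := by
  refine StrictMonoOn.strictConvexOn_of_deriv (convex_Ioi 0)
    (fun t ht => (hasDerivAt_log_Gamma ht).continuousAt.continuousWithinAt) ?_
  rw [interior_Ioi]
  exact strictMonoOn_digamma.congr fun t ht => (hasDerivAt_log_Gamma ht).deriv.symm

lemma slope_log_Gamma {y : ℝ} (hy : 0 < y) : slope (log ∘ Gamma) y (y + 1) = log y := by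
  rw [slope_def_field, add_sub_cancel_left, div_one, Function.comp_apply, Function.comp_apply,
    log_Gamma_add_one hy, add_sub_cancel_left]

lemma digamma_lt_log {y : ℝ} (hy : 0 < y) : digamma y < log y :=
  slope_log_Gamma hy ▸ strictConvexOn_log_Gamma.lt_slope_of_hasDerivAt hy
    (by simp; linarith) (lt_add_one y) (hasDerivAt_log_Gamma hy)

lemma log_lt_digamma_add_one {y : ℝ} (hy : 0 < y) : log y < digamma (y + 1) :=
  slope_log_Gamma hy ▸ strictConvexOn_log_Gamma.slope_lt_of_hasDerivAt hy
    (by simp; linarith) (lt_add_one y) (hasDerivAt_log_Gamma (by linarith))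

lemma inv_lt_log_add_half_sub_log_sub_half {w : ℝ} (hw : 1 / 2 < w) :
    w⁻¹ < log (w + 1 / 2) - log (w - 1 / 2) := by
  have ha : 0 < w - 1 / 2 := by linarith
  have hterm : ∀ k : ℕ, 0 < 2 * (1 / (2 * k + 1)) * (1 / (2 * (w - 1 / 2) + 1)) ^ (2 * k + 1) :=
    fun k => by positivity
  have hlt := lt_hasSum (hasSum_log_one_add_inv ha) 0 (fun j _ => (hterm j).le) 1 one_ne_zero
    (hterm 1)
  have hfirst : 2 * (1 / (2 * ((0 : ℕ) : ℝ) + 1)) * (1 / (2 * (w - 1 / 2) + 1)) ^ (2 * 0 + 1)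
      = w⁻¹ := by
    norm_num
    ring
  have hlog : log (1 + (w - 1 / 2)⁻¹) = log (w + 1 / 2) - log (w - 1 / 2) := by
    rw [← log_div (by linarith) ha.ne']
    congr 1
    rw [eq_div_iff ha.ne', add_mul, inv_mul_cancel₀ ha.ne']
    ring
  rwa [hfirst, hlog] at hlt

lemma digamma_add_one_sub_log_lt {w : ℝ} (hw : 1 / 2 < w) :
    digamma (w + 1) - log (w + 1 - 1 / 2) < digamma w - log (w - 1 / 2) := by
  rw [digamma_add_one (by linarith), show w + 1 - 1 / 2 = w + 1 / 2 by ring]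
  linarith [inv_lt_log_add_half_sub_log_sub_half hw]

lemma log_sub_half_le_digamma {w : ℝ} (hw : 1 / 2 < w) : log (w - 1 / 2) ≤ digamma w := by
  let a : ℕ → ℝ := fun n => digamma (w + n) - log (w + n - 1 / 2)
  have ha_anti : Antitone a := antitone_nat_of_succ_le fun n => by
    simpa only [a, Nat.cast_succ, add_assoc] using
      (digamma_add_one_sub_log_lt (w := w + n) (by linarith [n.cast_nonneg (α := ℝ)])).le
  have ha_lower (n : ℕ) : log (w + n) - log (w + n + 1 / 2) ≤ a (n + 1) := by
    have := log_lt_digamma_add_one (y := w + n) (by linarith [n.cast_nonneg (α := ℝ)])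
    simp only [a, Nat.cast_succ, ← add_assoc, show w + n + 1 - 1 / 2 = w + n + 1 / 2 by ring]
    linarith
  have hlim : Tendsto (fun n : ℕ => log (w + n) - log (w + n + 1 / 2)) atTop (𝓝 0) := by
    have := (tendsto_log_comp_add_sub_log (-(1 / 2))).comp <|
      tendsto_atTop_add_const_right _ (1 / 2) <|
        tendsto_atTop_add_const_left _ w tendsto_natCast_atTop_atTop
    simpa only [Function.comp_def, add_neg_cancel_right] using this
  have : 0 ≤ a 0 := le_of_tendsto' hlim fun n => (ha_lower n).trans (ha_anti n.succ.zero_le)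
  simpa [a] using this

lemma log_sub_half_lt_digamma {w : ℝ} (hw : 1 / 2 < w) : log (w - 1 / 2) < digamma w := by
  linarith [digamma_add_one_sub_log_lt hw, log_sub_half_le_digamma (w := w + 1) (by linarith)]

theorem log_lt_digamma_lt_log (x : ℝ) (hx : -(1/2) < x) :
    Real.log (x + 1/2) < digamma (x + 1) ∧ digamma (x + 1) < Real.log (x + 1) := by
  refine ⟨?_, digamma_lt_log (by linarith)⟩
  simpa only [show x + 1 - 1 / 2 = x + 1 / 2 by ring] using
    log_sub_half_lt_digamma (w := x + 1) (by linarith)
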